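/- Let (X,d) be a separable complete metric space. Then the Wijsman hyperspace (2^X, T_{W(d)}) is a Polish space (separable and completely metrizable). -/

import Mathlib

/-!
Fix a dense sequence `u` in `X`. The map `A ↦ (d(u n, A))ₙ` is an embedding of the Wijsman
hyperspace into `ℕ → ℝ`: it is injective because a closed set is determined by its distance
function, which is 1-Lipschitz and hence determined by its values on `range u`, and for the same
equicontinuity reason convergence of `d(x, ·)` for every `x` already follows from convergence
on the sequence. Its range is the set of sequences `t` with `t n ≤ t m + d(u n, u m)` such that
every `t n` is approximately attained, i.e. `d(u n, u m) < t n + ε` for some `m` with `t m < ε`;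
this set is `Gδ` in `ℕ → ℝ`, hence Polish. Realizing such a `t` is where completeness enters:
iterating the approximation condition produces a Cauchy sequence whose limit lies in the zero set
of the 1-Lipschitz extension `x ↦ infₙ (t n + d(x, u n))`, and that zero set has trace `t`.
-/

/-- The Wijsman hyperspace of a metric space `X`: the collection `2^X` of all
nonempty closed subsets of `X`. -/
def WijsmanHyperspace (X : Type*) [MetricSpace X] : Type _ :=
  {A : Set X // A.Nonempty ∧ IsClosed A}

/-- The Wijsman topology `T_{W(d)}`: the topology induced from the product topology
on `X → ℝ` by the injection `A ↦ (x ↦ d(x, A))`, i.e. the weakest topology making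
all distance functionals `A ↦ d(x, A)` continuous. -/
noncomputable instance wijsmanTopology (X : Type*) [MetricSpace X] :
    TopologicalSpace (WijsmanHyperspace X) :=
  TopologicalSpace.induced (fun A (x : X) => Metric.infDist x A.1) Pi.topologicalSpace

open Set Filter Topology Metric

theorem IsGδ.polishSpace {α : Type*} [TopologicalSpace α] [PolishSpace α] {s : Set α}
    (hs : IsGδ s) : PolishSpace s := by
  obtain ⟨U, hU, rfl⟩ := hs.eq_iInter_nat
  have := fun n => (hU n).polishSpace
  -- `⋂ n, U n` is homeomorphic to the diagonal of `∀ n, U n`, a closed subset.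
  let g : (⋂ n, U n : Set α) → ∀ n, U n := fun x n => ⟨x, mem_iInter.1 x.2 n⟩
  have hg : Continuous g := continuous_pi fun n => continuous_subtype_val.subtype_mk _
  have hval : Continuous fun y : ∀ n, U n => (y 0 : α) :=
    continuous_subtype_val.comp (continuous_apply 0)
  have hrange : range g = ⋂ n, {y | (y n : α) = y 0} := by
    ext y
    simp only [mem_range, mem_iInter, mem_ofPred_eq]
    refine ⟨by rintro ⟨x, rfl⟩ n; rfl, fun h => ?_⟩
    exact ⟨⟨y 0, mem_iInter.2 fun n => h n ▸ (y n).2⟩, funext fun n => Subtype.ext (h n).symm⟩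
  refine IsClosedEmbedding.polishSpace (f := g) ⟨⟨IsInducing.of_comp hg hval
    IsInducing.subtypeVal, fun x y h => Subtype.ext (congrArg (fun y => (y 0 : α)) h)⟩, ?_⟩
  rw [hrange]
  exact isClosed_iInter fun n =>
    isClosed_eq (continuous_subtype_val.comp (continuous_apply n)) hval

theorem Topology.IsEmbedding.polishSpace_of_isGδ_range {α β : Type*} [TopologicalSpace α]
    [TopologicalSpace β] [PolishSpace β] {f : α → β} (hf : IsEmbedding f)
    (hrange : IsGδ (range f)) : PolishSpace α :=
  haveI := hrange.polishSpace
  hf.toHomeomorph.isClosedEmbedding.polishSpace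

theorem isGδ_ofPred_forall_pos_exists_lt {α ι : Type*} [TopologicalSpace α] {g : ι → α → ℝ}
    (hg : ∀ i, Continuous (g i)) : IsGδ {x | ∀ ε > 0, ∃ i, g i x < ε} := by
  have : {x | ∀ ε > 0, ∃ i, g i x < ε} = ⋂ k : ℕ, ⋃ i, {x | g i x < 1 / (k + 1)} := by
    ext x
    simp only [mem_ofPred_eq, mem_iInter, mem_iUnion]
    refine ⟨fun h k => h _ Nat.one_div_pos_of_nat, fun h ε hε => ?_⟩
    obtain ⟨k, hk⟩ := exists_nat_one_div_lt hε
    obtain ⟨i, hi⟩ := h k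
    exact ⟨i, hi.trans hk⟩
  rw [this]
  exact .iInter fun k => (isOpen_iUnion fun i => isOpen_lt (hg i) continuous_const).isGδ

section MetricSpace

variable {X : Type*} [MetricSpace X]

theorem Metric.tendsto_infDist_of_denseRange {ι : Type*} {l : Filter ι} {S : ι → Set X}
    {T : Set X} {u : ℕ → X} (hu : DenseRange u)
    (h : ∀ n, Tendsto (fun i => infDist (u n) (S i)) l (𝓝 (infDist (u n) T))) (x : X) :
    Tendsto (fun i => infDist x (S i)) l (𝓝 (infDist x T)) := by
  have hequi : Equicontinuous fun i (y : X) => infDist y (S i) :=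
    (LipschitzWith.uniformEquicontinuous _ 1 fun i => lipschitz_infDist_pt (S i)).equicontinuous
  refine (hequi x).tendsto_of_mem_closure (s := range u)
    (continuous_infDist_pt T).continuousWithinAt ?_ (hu.closure_eq ▸ mem_univ x)
  rintro _ ⟨n, rfl⟩
  exact h n

theorem LipschitzWith.le_infDist_ofPred_nonpos {f : X → ℝ} (hf : LipschitzWith 1 f)
    (hne : {y | f y ≤ 0}.Nonempty) (x : X) : f x ≤ infDist x {y | f y ≤ 0} :=
  (le_infDist hne).2 fun y hy => by
    linarith [hy.out, (hf.dist_le_mul x y).trans_eq (one_mul _), le_abs_self (f x - f y),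
      Real.dist_eq (f x) (f y)]

theorem exists_nonpos_dist_lt_of_approx [CompleteSpace X] {f : X → ℝ} (hf : Continuous f)
    {S : Set X} (hS : ∀ x ∈ S, ∀ ε > 0, ∃ z ∈ S, dist x z < f x + ε ∧ f z < ε)
    {x : X} (hx : x ∈ S) {ε : ℝ} (hε : 0 < ε) : ∃ a, f a ≤ 0 ∧ dist x a < f x + ε := by
  choose! g hgS hg using hS
  set δ : ℕ → ℝ := fun k => ε / 8 * (1 / 2) ^ k
  have hδ : ∀ k, 0 < δ k := fun k => by positivity
  let z : ℕ → X := fun k => Nat.rec x (fun k y => g y (δ k)) k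
  have hzS : ∀ k, z k ∈ S := fun k => by
    induction k with
    | zero => exact hx
    | succ k ih => exact hgS _ ih _ (hδ k)
  have hz : ∀ k, dist (z k) (z (k + 1)) < f (z k) + δ k ∧ f (z (k + 1)) < δ k :=
    fun k => hg _ (hzS k) _ (hδ k)
  have hstep : ∀ k, dist (z (k + 1)) (z (k + 1 + 1)) ≤ ε / 4 * (1 / 2) ^ k := fun k => by
    have hδ_succ : δ (k + 1) = δ k / 2 := by simp only [δ, pow_succ]; ring
    have hbound : ε / 4 * (1 / 2) ^ k = 2 * δ k := by simp only [δ]; ring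
    linarith [(hz (k + 1)).1, (hz k).2, hδ k]
  obtain ⟨a, ha⟩ :=
    cauchySeq_tendsto_of_complete (cauchySeq_of_le_geometric _ _ one_half_lt_one hstep)
  have hδ0 : Tendsto δ atTop (𝓝 0) := by
    simpa only [mul_zero] using
      (tendsto_pow_atTop_nhds_zero_of_lt_one one_half_pos.le one_half_lt_one).const_mul (ε / 8)
  refine ⟨a, le_of_tendsto_of_tendsto' ((hf.tendsto a).comp ha) hδ0 fun k => (hz k).2.le, ?_⟩
  have hza : dist (z 1) a ≤ ε / 4 / (1 - 1 / 2) :=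
    dist_le_of_le_geometric_of_tendsto₀ _ _ one_half_lt_one hstep ha
  have hxz : dist x (z 1) < f x + δ 0 := (hz 0).1
  norm_num [δ] at hza hxz
  calc dist x a ≤ dist x (z 1) + dist (z 1) a := dist_triangle _ _ _
    _ < f x + ε := by linarith

end MetricSpace

section McShane

variable {X : Type*} [MetricSpace X] (u : ℕ → X) (t : ℕ → ℝ)

noncomputable def mcShane (x : X) : ℝ := ⨅ n, (t n + dist x (u n))

variable {u t}

theorem mcShane_le (ht : ∀ n, 0 ≤ t n) (x : X) (n : ℕ) : mcShane u t x ≤ t n + dist x (u n) :=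
  ciInf_le ⟨0, by rintro _ ⟨m, rfl⟩; exact add_nonneg (ht m) dist_nonneg⟩ n

theorem lipschitzWith_mcShane (ht : ∀ n, 0 ≤ t n) : LipschitzWith 1 (mcShane u t) :=
  .of_le_add fun x y => sub_le_iff_le_add.1 <| le_ciInf fun n => by
    linarith [mcShane_le (u := u) ht x n, dist_triangle x y (u n)]

theorem mcShane_apply_self (ht : ∀ n, 0 ≤ t n) (htu : ∀ n m, t n ≤ t m + dist (u n) (u m))
    (n : ℕ) : mcShane u t (u n) = t n :=
  le_antisymm (by simpa using mcShane_le (u := u) ht (u n) n) (le_ciInf (htu n))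

end McShane

namespace WijsmanHyperspace

variable {X : Type*} [MetricSpace X]

theorem isInducing_infDist :
    IsInducing fun (A : WijsmanHyperspace X) (x : X) => infDist x A.1 := ⟨rfl⟩

theorem continuous_infDist (x : X) : Continuous fun A : WijsmanHyperspace X => infDist x A.1 :=
  (continuous_apply x).comp isInducing_infDist.continuous

noncomputable def infDistSeq (u : ℕ → X) (A : WijsmanHyperspace X) : ℕ → ℝ :=
  fun n => infDist (u n) A.1

variable {u : ℕ → X}

theorem infDistSeq_injective (hu : DenseRange u) : Function.Injective (infDistSeq u) := by
  intro A B h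
  have hAB : (infDist · A.1) = (infDist · B.1) :=
    (continuous_infDist_pt _).ext_on hu (continuous_infDist_pt _) (by
      rintro _ ⟨n, rfl⟩; exact congrFun h n)
  refine Subtype.ext (Set.ext fun x => ?_)
  rw [A.2.2.mem_iff_infDist_zero A.2.1, B.2.2.mem_iff_infDist_zero B.2.1, congrFun hAB x]

theorem isEmbedding_infDistSeq (hu : DenseRange u) : IsEmbedding (infDistSeq u) := by
  have hcont : Continuous (infDistSeq u) := continuous_pi fun n => continuous_infDist (u n)
  refine ⟨isInducing_iff_nhds.2 fun A => le_antisymm (hcont.tendsto A).le_comap ?_,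
    infDistSeq_injective hu⟩
  rw [← tendsto_id', isInducing_infDist.tendsto_nhds_iff, tendsto_pi_nhds]
  exact tendsto_infDist_of_denseRange hu fun n =>
    ((continuous_apply n).tendsto (infDistSeq u A)).comp tendsto_comap

def admissibleSeqs (u : ℕ → X) : Set (ℕ → ℝ) :=
  {t | (∀ n m, t n ≤ t m + dist (u n) (u m)) ∧
    ∀ n, ∀ ε > 0, ∃ m, dist (u n) (u m) < t n + ε ∧ t m < ε}

variable {t : ℕ → ℝ}

theorem nonneg_of_mem_admissibleSeqs (ht : t ∈ admissibleSeqs u) (n : ℕ) : 0 ≤ t n := by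
  by_contra! h
  obtain ⟨m, hm, -⟩ := ht.2 n (-t n) (neg_pos.2 h)
  linarith [dist_nonneg (x := u n) (y := u m)]

theorem isGδ_admissibleSeqs (u : ℕ → X) : IsGδ (admissibleSeqs u) := by
  have hclosed : IsClosed {t : ℕ → ℝ | ∀ n m, t n ≤ t m + dist (u n) (u m)} := by
    simp only [ofPred_forall]
    exact isClosed_iInter fun n => isClosed_iInter fun m =>
      isClosed_le (continuous_apply n) ((continuous_apply m).add continuous_const)
  have happrox (n : ℕ) :
      IsGδ {t : ℕ → ℝ | ∀ ε > 0, ∃ m, dist (u n) (u m) < t n + ε ∧ t m < ε} := by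
    simpa only [max_lt_iff, sub_lt_iff_lt_add'] using
      isGδ_ofPred_forall_pos_exists_lt
        (g := fun m (s : ℕ → ℝ) => max (dist (u n) (u m) - s n) (s m))
        fun m => (continuous_const.sub (continuous_apply n)).max (continuous_apply m)
  convert hclosed.isGδ.inter (IsGδ.iInter happrox) using 1
  ext t
  simp [admissibleSeqs]

theorem infDistSeq_mem_admissibleSeqs (hu : DenseRange u) (A : WijsmanHyperspace X) :
    infDistSeq u A ∈ admissibleSeqs u := by
  refine ⟨fun n m => infDist_le_infDist_add_dist, fun n ε hε => ?_⟩
  obtain ⟨a, haA, ha⟩ := (infDist_lt_iff A.2.1).1 (lt_add_of_pos_right (infDist (u n) A.1)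
    (half_pos hε))
  obtain ⟨m, hm⟩ := Metric.denseRange_iff.1 hu a (ε / 2) (half_pos hε)
  refine ⟨m, ?_, ?_⟩ <;> dsimp only [infDistSeq]
  · linarith [dist_triangle (u n) a (u m)]
  · linarith [infDist_le_dist_of_mem (x := u m) haA, dist_comm a (u m)]

theorem mem_range_infDistSeq [CompleteSpace X] (ht : t ∈ admissibleSeqs u) :
    t ∈ range (infDistSeq u) := by
  have ht0 := nonneg_of_mem_admissibleSeqs ht
  have hf := lipschitzWith_mcShane (u := u) ht0
  have hfu := mcShane_apply_self ht0 ht.1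
  have happrox : ∀ x ∈ range u, ∀ ε > 0,
      ∃ z ∈ range u, dist x z < mcShane u t x + ε ∧ mcShane u t z < ε := by
    rintro _ ⟨n, rfl⟩ ε hε
    obtain ⟨m, hnm, hm⟩ := ht.2 n ε hε
    exact ⟨u m, mem_range_self m, by rwa [hfu], by rwa [hfu]⟩
  have hnear (n : ℕ) {ε : ℝ} (hε : 0 < ε) :
      ∃ a, mcShane u t a ≤ 0 ∧ dist (u n) a < t n + ε := by
    simpa only [hfu] using
      exists_nonpos_dist_lt_of_approx hf.continuous happrox (mem_range_self n) hε
  have hne : {y | mcShane u t y ≤ 0}.Nonempty :=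
    let ⟨a, ha, _⟩ := hnear 0 one_pos
    ⟨a, ha⟩
  refine ⟨⟨_, hne, isClosed_le hf.continuous continuous_const⟩, funext fun n => le_antisymm ?_ ?_⟩
  · exact le_of_forall_pos_lt_add fun ε hε => (infDist_lt_iff hne).2 (hnear n hε)
  · exact hfu n ▸ hf.le_infDist_ofPred_nonpos hne (u n)

theorem range_infDistSeq [CompleteSpace X] (hu : DenseRange u) :
    range (infDistSeq u) = admissibleSeqs u :=
  (range_subset_iff.2 (infDistSeq_mem_admissibleSeqs hu)).antisymm fun _ => mem_range_infDistSeq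

end WijsmanHyperspace

/-- Beer: the Wijsman hyperspace of a separable complete metric space is Polish. -/
theorem stmt12 (X : Type*) [MetricSpace X] [TopologicalSpace.SeparableSpace X]
    [CompleteSpace X] :
    PolishSpace (WijsmanHyperspace X) := by
  rcases isEmpty_or_nonempty X with hX | hX
  · have : IsEmpty (WijsmanHyperspace X) := ⟨fun A => hX.elim A.2.1.some⟩
    infer_instance
  · obtain ⟨u, hu⟩ := TopologicalSpace.exists_dense_seq X
    refine (WijsmanHyperspace.isEmbedding_infDistSeq hu).polishSpace_of_isGδ_range ?_
    rw [WijsmanHyperspace.range_infDistSeq hu]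
    exact WijsmanHyperspace.isGδ_admissibleSeqs u
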